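/- arXiv:2512.01978 — 2 statements merged into one kernel-verified Lean document; each statement's English description precedes it below -/
import Mathlib

section
/- Let G be a graph and V₁, …, V_ℓ subsets of V(G) with union V(G). Then for each k ≥ 0, fμᵏ(G) ≤ Σᵢ fμᵏ(hull(Vᵢ)), where hull(Vᵢ) is the convex hull of Vᵢ in G. -/
open SimpleGraph

variable {V : Type*}

/-- `X` is a `k`-fault-tolerant mutual-visibility set of `G`: for any two distinct
non-adjacent vertices `u v ∈ X` there are `k+1` internally disjoint shortest
`u,v`-paths whose only vertices in `X` are `u` and `v`. -/
def IsFtmvSet (G : SimpleGraph V) (k : ℕ) (X : Set V) : Prop :=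
  ∀ u ∈ X, ∀ v ∈ X, u ≠ v → ¬ G.Adj u v →
    ∃ P : Fin (k + 1) → G.Path u v,
      (∀ i, (P i).1.length = G.dist u v) ∧
      (∀ i, ∀ w ∈ (P i).1.support, w ∈ X → w = u ∨ w = v) ∧
      (∀ i j, i ≠ j → ∀ w, w ∈ (P i).1.support → w ∈ (P j).1.support → w = u ∨ w = v)

/-- The `k`-fault-tolerant mutual-visibility number: maximum cardinality of a `k`-ftmv set. -/
noncomputable def ftmvNum (G : SimpleGraph V) (k : ℕ) : ℕ :=
  sSup {n | ∃ X : Set V, IsFtmvSet G k X ∧ X.ncard = n}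

/-- The clique number of `G`. -/
noncomputable def cliqueNum' (G : SimpleGraph V) : ℕ :=
  sSup {n | ∃ s : Finset V, G.IsNClique n s}

/-- A set `S` is convex in `G` if every shortest path between vertices of `S`
lies entirely in `S`. -/
def IsConvexSet (G : SimpleGraph V) (S : Set V) : Prop :=
  ∀ u ∈ S, ∀ v ∈ S, ∀ p : G.Walk u v, p.IsPath → p.length = G.dist u v →
    ∀ w ∈ p.support, w ∈ S

/-- The convex hull of `S` in `G`: intersection of all convex sets containing `S`. -/
def convexHullSet (G : SimpleGraph V) (S : Set V) : Set V :=
  ⋂₀ {T : Set V | S ⊆ T ∧ IsConvexSet G T}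

/-!
A `k`-ftmv set `X` of `G` meets every convex set `T` in a `k`-ftmv set of `G[T]`: the shortest
`u,v`-paths witnessing visibility between two vertices of `X ∩ T` stay inside `T` by convexity, and
distances in `G[T]` agree with those in `G`. Since the hulls of the `Vᵢ` cover `V(G)`, any
`k`-ftmv set `X` of `G` is covered by the sets `X ∩ hull(Vᵢ)`, of sizes at most `fμᵏ(hull(Vᵢ))`.
-/

namespace SimpleGraph

variable {W : Type*} {G : SimpleGraph V} {s : Set V} {u v : V}

lemma Reachable.dist_map_le {G' : SimpleGraph W} (f : G →g G') (h : G.Reachable u v) :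
    G'.dist (f u) (f v) ≤ G.dist u v := by
  obtain ⟨q, hq⟩ := h.exists_walk_length_eq_dist
  exact (dist_le (q.map f)).trans_eq (by rw [Walk.length_map, hq])

namespace Walk

lemma length_induce (w : G.Walk u v) (hw : ∀ x ∈ w.support, x ∈ s) :
    (w.induce s hw).length = w.length :=
  (length_map _ _).symm.trans (congrArg length (map_induce w hw))

lemma IsPath.induce {w : G.Walk u v} (hp : w.IsPath) (hw : ∀ x ∈ w.support, x ∈ s) :
    (w.induce s hw).IsPath :=
  IsPath.of_map (f := (Embedding.induce s).toHom) (by rwa [map_induce])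

lemma mem_support_induce_iff (w : G.Walk u v) (hw : ∀ x ∈ w.support, x ∈ s) {x : s} :
    x ∈ (w.induce s hw).support ↔ (x : V) ∈ w.support := by
  simp [support_induce]

end Walk

lemma dist_induce_of_length_eq_dist (w : G.Walk u v) (hw : ∀ x ∈ w.support, x ∈ s)
    (hlen : w.length = G.dist u v) :
    (G.induce s).dist ⟨u, hw u w.start_mem_support⟩ ⟨v, hw v w.end_mem_support⟩ = G.dist u v :=
  le_antisymm ((dist_le (w.induce s hw)).trans_eq (by rw [Walk.length_induce, hlen]))
    ((w.induce s hw).reachable.dist_map_le (Embedding.induce s).toHom)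

end SimpleGraph

section

variable {G : SimpleGraph V} {k : ℕ}

lemma subset_convexHullSet (S : Set V) : S ⊆ convexHullSet G S :=
  fun _ hx _ hT => hT.1 hx

lemma isConvexSet_convexHullSet (S : Set V) : IsConvexSet G (convexHullSet G S) :=
  fun u hu v hv p hp hlen w hw T hT => hT.2 u (hu T hT) v (hv T hT) p hp hlen w hw

lemma IsFtmvSet.preimage_val_of_isConvexSet {X T : Set V} (hX : IsFtmvSet G k X)
    (hT : IsConvexSet G T) : IsFtmvSet (G.induce T) k (Subtype.val ⁻¹' X) := by
  rintro ⟨u, hu⟩ huX ⟨v, hv⟩ hvX hne hadj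
  obtain ⟨P, hPlen, hPX, hPdisj⟩ :=
    hX u huX v hvX (fun h => hne (Subtype.ext h)) (fun h => hadj (by simpa using h))
  have hPT i : ∀ w ∈ (P i).1.support, w ∈ T := hT u hu v hv (P i).1 (P i).2 (hPlen i)
  refine ⟨fun i => ⟨(P i).1.induce T (hPT i), (P i).2.induce (hPT i)⟩, fun i => ?_,
    fun i w hw hwX => ?_, fun i j hij w hwi hwj => ?_⟩
  · rw [Walk.length_induce, hPlen i, dist_induce_of_length_eq_dist (P i).1 (hPT i) (hPlen i)]
  · rw [Walk.mem_support_induce_iff] at hw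
    simpa only [Subtype.ext_iff] using hPX i w hw hwX
  · rw [Walk.mem_support_induce_iff] at hwi hwj
    simpa only [Subtype.ext_iff] using hPdisj i j hij w hwi hwj

lemma ncard_le_ftmvNum [Finite V] {X : Set V} (hX : IsFtmvSet G k X) : X.ncard ≤ ftmvNum G k :=
  le_csSup ⟨Nat.card V, by rintro _ ⟨Y, -, rfl⟩; exact Y.ncard_le_card⟩ ⟨X, hX, rfl⟩

lemma ftmvNum_le {n : ℕ} (h : ∀ X, IsFtmvSet G k X → X.ncard ≤ n) : ftmvNum G k ≤ n :=
  csSup_le ⟨0, ∅, fun _ h => h.elim, Set.ncard_empty V⟩ (by rintro _ ⟨X, hX, rfl⟩; exact h X hX)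

lemma IsFtmvSet.ncard_inter_le_ftmvNum_induce [Finite V] {X T : Set V} (hX : IsFtmvSet G k X)
    (hT : IsConvexSet G T) : (T ∩ X).ncard ≤ ftmvNum (G.induce T) k := by
  rw [← Subtype.image_preimage_val, Set.ncard_image_of_injective _ Subtype.val_injective]
  exact ncard_le_ftmvNum (hX.preimage_val_of_isConvexSet hT)

end

theorem stmt6_general [Fintype V] (G : SimpleGraph V)
    (k ℓ : ℕ) (Vs : Fin ℓ → Set V) (hcov : (⋃ i, Vs i) = Set.univ) :
    ftmvNum G k ≤ ∑ i : Fin ℓ, ftmvNum (G.induce (convexHullSet G (Vs i))) k := by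
  refine ftmvNum_le fun X hX => ?_
  have hX_cover : X ⊆ ⋃ i, convexHullSet G (Vs i) ∩ X := fun x hx => by
    obtain ⟨i, hi⟩ := Set.mem_iUnion.1 (hcov ▸ Set.mem_univ x)
    exact Set.mem_iUnion.2 ⟨i, subset_convexHullSet (Vs i) hi, hx⟩
  calc X.ncard ≤ (⋃ i, convexHullSet G (Vs i) ∩ X).ncard := Set.ncard_le_ncard hX_cover
    _ ≤ ∑ i, (convexHullSet G (Vs i) ∩ X).ncard := Set.ncard_iUnion_le_of_fintype _
    _ ≤ _ := Finset.sum_le_sum fun i _ =>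
      hX.ncard_inter_le_ftmvNum_induce (isConvexSet_convexHullSet (Vs i))

theorem stmt6 [Fintype V] (G : SimpleGraph V) (hconn : G.Connected)
    (k ℓ : ℕ) (Vs : Fin ℓ → Set V) (hcov : (⋃ i, Vs i) = Set.univ) :
    ftmvNum G k ≤ ∑ i : Fin ℓ, ftmvNum (G.induce (convexHullSet G (Vs i))) k :=
  stmt6_general G k ℓ Vs hcov
end

section
/- For the grid graph P_m □ P_n with 2 ≤ m ≤ n, fμ¹(P_m □ P_n) = m. In particular the diagonal set {(i,i) : i ∈ [m]} is a 1-ftmv set. -/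
open SimpleGraph

variable {V : Type*}

/-!
Lower bound: in a box product of connected graphs, a set meeting every row and every column at
most once is a 1-ftmv set, since two of its points are joined by the two "L-shaped" geodesics,
which go around the rectangle they span in opposite directions. The diagonal is such a set.

Upper bound: in a 1-ftmv set `X`, two points `u, v` that are not adjacent need two distinct
first steps on geodesics towards each other, outside `X`. In the grid, two points of `X` in a
common row therefore have to be adjacent (otherwise the only first step is along the row), and
then `X` lies in that row (otherwise the point of the pair farther from the third point has its
column step blocked by the other one and only the row step left). As the grid has no triangles,
`X` either has at most two points or meets every row at most once.
-/

namespace SimpleGraph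

variable {α β : Type*} {G : SimpleGraph α} {H : SimpleGraph β}

lemma pathGraph_dist_le_length {n : ℕ} {a b : Fin n} (p : (pathGraph n).Walk a b) :
    Nat.dist a b ≤ p.length := by
  induction p with
  | nil => simp
  | cons h p ih =>
    rw [pathGraph_adj] at h
    simp only [Walk.length_cons, Nat.dist] at ih ⊢
    omega

lemma pathGraph_dist {n : ℕ} (a b : Fin n) : (pathGraph n).dist a b = Nat.dist a b := by
  refine le_antisymm ?_ ?_
  · induction hk : Nat.dist a b generalizing a with
    | zero =>
      obtain rfl : a = b := Fin.ext (by simp only [Nat.dist] at hk; omega)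
      simp
    | succ k ih =>
      obtain ⟨c, hac, hcb⟩ : ∃ c, (pathGraph n).Adj a c ∧ Nat.dist c b = k := by
        simp only [Nat.dist] at hk
        by_cases hab : (a : ℕ) < b
        · exact ⟨⟨a + 1, by omega⟩, by simp [pathGraph_adj], by simp [Nat.dist]; omega⟩
        · exact ⟨⟨a - 1, by omega⟩, by simp [pathGraph_adj]; omega, by simp [Nat.dist]; omega⟩
      have := ih c hcb
      calc (pathGraph n).dist a b ≤ (pathGraph n).dist a c + (pathGraph n).dist c b :=
            hac.reachable.dist_triangle_left b
        _ ≤ k + 1 := by rw [dist_eq_one_iff_adj.mpr hac]; omega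
  · obtain ⟨p, hp⟩ := (pathGraph_preconnected n a b).exists_walk_length_eq_dist
    exact hp ▸ pathGraph_dist_le_length p

lemma dist_boxProd (hG : G.Preconnected) (hH : H.Preconnected) (x y : α × β) :
    (G □ H).dist x y = G.dist x.1 y.1 + H.dist x.2 y.2 := by
  simp only [dist, edist_boxProd]
  exact ENat.toNat_add (edist_ne_top_iff_reachable.mpr (hG _ _))
    (edist_ne_top_iff_reachable.mpr (hH _ _))

lemma Walk.length_boxProdLeft {a₁ a₂ : α} (b : β) (p : G.Walk a₁ a₂) :
    (p.boxProdLeft H b).length = p.length :=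
  Walk.length_map _ _

lemma Walk.length_boxProdRight {b₁ b₂ : β} (a : α) (p : H.Walk b₁ b₂) :
    (p.boxProdRight G a).length = p.length :=
  Walk.length_map _ _

lemma Walk.support_boxProdLeft {a₁ a₂ : α} (b : β) (p : G.Walk a₁ a₂) :
    (p.boxProdLeft H b).support = p.support.map (·, b) :=
  Walk.support_map _ _

lemma Walk.support_boxProdRight {b₁ b₂ : β} (a : α) (p : H.Walk b₁ b₂) :
    (p.boxProdRight G a).support = p.support.map (a, ·) :=
  Walk.support_map _ _

lemma exists_geodesic_boxProd_left_append_right (hG : G.Preconnected) (hH : H.Preconnected)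
    (a₁ a₂ : α) (b₁ b₂ : β) :
    ∃ p : (G □ H).Walk (a₁, b₁) (a₂, b₂), p.length = (G □ H).dist (a₁, b₁) (a₂, b₂) ∧
      ∀ z ∈ p.support, z.2 = b₁ ∨ z.1 = a₂ := by
  obtain ⟨q, hq⟩ := (hG a₁ a₂).exists_walk_length_eq_dist
  obtain ⟨r, hr⟩ := (hH b₁ b₂).exists_walk_length_eq_dist
  refine ⟨(q.boxProdLeft H b₁).append (r.boxProdRight G a₂), ?_, ?_⟩
  · rw [Walk.length_append, Walk.length_boxProdLeft, Walk.length_boxProdRight,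
      dist_boxProd hG hH, hq, hr]
  · intro z hz
    simp only [Walk.mem_support_append_iff, Walk.support_boxProdLeft,
      Walk.support_boxProdRight, List.mem_map] at hz
    rcases hz with ⟨a, -, rfl⟩ | ⟨b, -, rfl⟩
    · exact .inl rfl
    · exact .inr rfl

lemma exists_geodesic_boxProd_right_append_left (hG : G.Preconnected) (hH : H.Preconnected)
    (a₁ a₂ : α) (b₁ b₂ : β) :
    ∃ p : (G □ H).Walk (a₁, b₁) (a₂, b₂), p.length = (G □ H).dist (a₁, b₁) (a₂, b₂) ∧
      ∀ z ∈ p.support, z.1 = a₁ ∨ z.2 = b₂ := by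
  obtain ⟨q, hq⟩ := (hG a₁ a₂).exists_walk_length_eq_dist
  obtain ⟨r, hr⟩ := (hH b₁ b₂).exists_walk_length_eq_dist
  refine ⟨(r.boxProdRight G a₁).append (q.boxProdLeft H b₂), ?_, ?_⟩
  · rw [Walk.length_append, Walk.length_boxProdLeft, Walk.length_boxProdRight,
      dist_boxProd hG hH, hq, hr, add_comm]
  · intro z hz
    simp only [Walk.mem_support_append_iff, Walk.support_boxProdLeft,
      Walk.support_boxProdRight, List.mem_map] at hz
    rcases hz with ⟨b, -, rfl⟩ | ⟨a, -, rfl⟩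
    · exact .inl rfl
    · exact .inr rfl

def IsGeodesicStep (G : SimpleGraph α) (u w v : α) : Prop :=
  G.Adj u w ∧ G.dist w v + 1 = G.dist u v

lemma Walk.exists_isGeodesicStep_mem_support {u v : α} (p : G.Walk u v)
    (hp : p.length = G.dist u v) (huv : u ≠ v) :
    ∃ w ∈ p.support, G.IsGeodesicStep u w v := by
  cases p with
  | nil => exact absurd rfl huv
  | @cons _ w _ h q =>
    refine ⟨w, by simp, h, le_antisymm ?_ ?_⟩
    · have := dist_le q
      rw [Walk.length_cons] at hp
      omega
    · have := h.reachable.dist_triangle_left v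
      rw [dist_eq_one_iff_adj.mpr h] at this
      omega

lemma isGeodesicStep_boxProd_iff (hG : G.Preconnected) (hH : H.Preconnected)
    {x w y : α × β} : (G □ H).IsGeodesicStep x w y ↔
      G.IsGeodesicStep x.1 w.1 y.1 ∧ x.2 = w.2 ∨ H.IsGeodesicStep x.2 w.2 y.2 ∧ x.1 = w.1 := by
  simp only [IsGeodesicStep, boxProd_adj, dist_boxProd hG hH]
  constructor
  · rintro ⟨⟨hadj, h₂⟩ | ⟨hadj, h₁⟩, hd⟩
    · rw [← h₂] at hd
      exact .inl ⟨⟨hadj, by omega⟩, h₂⟩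
    · rw [← h₁] at hd
      exact .inr ⟨⟨hadj, by omega⟩, h₁⟩
  · rintro (⟨⟨hadj, hd⟩, h₂⟩ | ⟨⟨hadj, hd⟩, h₁⟩)
    · exact ⟨.inl ⟨hadj, h₂⟩, by rw [← h₂]; omega⟩
    · exact ⟨.inr ⟨hadj, h₁⟩, by rw [← h₁]; omega⟩

lemma isGeodesicStep_pathGraph_iff {n : ℕ} {a c b : Fin n} :
    (pathGraph n).IsGeodesicStep a c b ↔
      (a : ℕ) < b ∧ (c : ℕ) = a + 1 ∨ (b : ℕ) < a ∧ (c : ℕ) + 1 = a := by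
  simp only [IsGeodesicStep, pathGraph_adj, pathGraph_dist, Nat.dist]
  omega

end SimpleGraph

section Ftmv

variable {G : SimpleGraph V} {X : Set V}

lemma isFtmvSet_one_iff : IsFtmvSet G 1 X ↔
    ∀ u ∈ X, ∀ v ∈ X, u ≠ v → ¬ G.Adj u v → ∃ p q : G.Path u v,
      p.1.length = G.dist u v ∧ q.1.length = G.dist u v ∧
      (∀ w ∈ p.1.support, w ∈ X → w = u ∨ w = v) ∧
      (∀ w ∈ q.1.support, w ∈ X → w = u ∨ w = v) ∧
      (∀ w ∈ p.1.support, w ∈ q.1.support → w = u ∨ w = v) := by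
  constructor
  · intro hX u hu v hv huv hadj
    obtain ⟨P, hlen, hPX, hdisj⟩ := hX u hu v hv huv hadj
    exact ⟨P 0, P 1, hlen 0, hlen 1, hPX 0, hPX 1, hdisj 0 1 (by decide)⟩
  · intro h u hu v hv huv hadj
    obtain ⟨p, q, hp, hq, hpX, hqX, hpq⟩ := h u hu v hv huv hadj
    refine ⟨![p, q], ?_, ?_, ?_⟩
    · simp [Fin.forall_fin_two, hp, hq]
    · simpa [Fin.forall_fin_two] using ⟨hpX, hqX⟩
    · intro i j hij w hwi hwj
      fin_cases i <;> fin_cases j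
      · exact absurd rfl hij
      · exact hpq w hwi hwj
      · exact hpq w hwj hwi
      · exact absurd rfl hij

lemma IsFtmvSet.exists_two_geodesic_steps (hX : IsFtmvSet G 1 X) {u v : V} (hu : u ∈ X)
    (hv : v ∈ X) (huv : u ≠ v) (hadj : ¬ G.Adj u v) :
    ∃ w₁ w₂, w₁ ≠ w₂ ∧ G.IsGeodesicStep u w₁ v ∧ G.IsGeodesicStep u w₂ v ∧ w₁ ∉ X ∧ w₂ ∉ X := by
  obtain ⟨p, q, hp, hq, hpX, hqX, hpq⟩ := isFtmvSet_one_iff.mp hX u hu v hv huv hadj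
  obtain ⟨w₁, hw₁, h₁⟩ := p.1.exists_isGeodesicStep_mem_support hp huv
  obtain ⟨w₂, hw₂, h₂⟩ := q.1.exists_isGeodesicStep_mem_support hq huv
  have interior : ∀ w, G.IsGeodesicStep u w v → ¬ (w = u ∨ w = v) := fun w h hw =>
    hw.elim h.1.ne' fun hwv => hadj (hwv ▸ h.1)
  refine ⟨w₁, w₂, ?_, h₁, h₂, fun hX₁ => interior w₁ h₁ (hpX w₁ hw₁ hX₁),
    fun hX₂ => interior w₂ h₂ (hqX w₂ hw₂ hX₂)⟩
  rintro rfl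
  exact interior w₁ h₁ (hpq w₁ hw₁ hw₂)

lemma ftmvNum_eq_of_forall_ncard_le {k N : ℕ} (hX : IsFtmvSet G k X)
    (hXN : X.ncard = N) (hle : ∀ Y, IsFtmvSet G k Y → Y.ncard ≤ N) : ftmvNum G k = N :=
  IsGreatest.csSup_eq ⟨⟨X, hX, hXN⟩, by rintro _ ⟨Y, hY, rfl⟩; exact hle Y hY⟩

end Ftmv

section BoxProd

variable {α β : Type*} {G : SimpleGraph α} {H : SimpleGraph β}

lemma isFtmvSet_one_boxProd_of_injOn (hG : G.Preconnected) (hH : H.Preconnected)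
    {X : Set (α × β)} (h₁ : Set.InjOn Prod.fst X) (h₂ : Set.InjOn Prod.snd X) :
    IsFtmvSet (G □ H) 1 X := by
  refine isFtmvSet_one_iff.mpr ?_
  rintro ⟨a₁, b₁⟩ hu ⟨a₂, b₂⟩ hv huv -
  have ha : a₁ ≠ a₂ := fun h => huv (h₁ hu hv h)
  have hb : b₁ ≠ b₂ := fun h => huv (h₂ hu hv h)
  obtain ⟨p, hp, hpL⟩ := exists_geodesic_boxProd_left_append_right hG hH a₁ a₂ b₁ b₂
  obtain ⟨q, hq, hqL⟩ := exists_geodesic_boxProd_right_append_left hG hH a₁ a₂ b₁ b₂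
  refine ⟨⟨p, p.isPath_of_length_eq_dist hp⟩, ⟨q, q.isPath_of_length_eq_dist hq⟩, hp, hq,
    ?_, ?_, ?_⟩
  · intro z hz hzX
    exact (hpL z hz).imp (h₂ hzX hu) (h₁ hzX hv)
  · intro z hz hzX
    exact (hqL z hz).imp (h₁ hzX hu) (h₂ hzX hv)
  · intro z hzp hzq
    rcases hpL z hzp with h | h <;> rcases hqL z hzq with h' | h'
    · exact .inl (Prod.ext h' h)
    · exact absurd (h.symm.trans h') hb
    · exact absurd (h'.symm.trans h) ha
    · exact .inr (Prod.ext h h')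

end BoxProd

section Grid

variable {m n : ℕ}

lemma grid_adj_iff {x y : Fin m × Fin n} : (pathGraph m □ pathGraph n).Adj x y ↔
    ((x.1 : ℕ) + 1 = y.1 ∨ (y.1 : ℕ) + 1 = x.1) ∧ (x.2 : ℕ) = y.2 ∨
      ((x.2 : ℕ) + 1 = y.2 ∨ (y.2 : ℕ) + 1 = x.2) ∧ (x.1 : ℕ) = y.1 := by
  simp only [boxProd_adj, pathGraph_adj, Fin.ext_iff]

lemma grid_isGeodesicStep_iff {x w y : Fin m × Fin n} :
    (pathGraph m □ pathGraph n).IsGeodesicStep x w y ↔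
      ((x.1 : ℕ) < y.1 ∧ (w.1 : ℕ) = x.1 + 1 ∨ (y.1 : ℕ) < x.1 ∧ (w.1 : ℕ) + 1 = x.1) ∧
          (x.2 : ℕ) = w.2 ∨
        ((x.2 : ℕ) < y.2 ∧ (w.2 : ℕ) = x.2 + 1 ∨ (y.2 : ℕ) < x.2 ∧ (w.2 : ℕ) + 1 = x.2) ∧
          (x.1 : ℕ) = w.1 := by
  rw [isGeodesicStep_boxProd_iff (pathGraph_preconnected m) (pathGraph_preconnected n),
    isGeodesicStep_pathGraph_iff, isGeodesicStep_pathGraph_iff, Fin.ext_iff, Fin.ext_iff]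

variable {X : Set (Fin m × Fin n)}

lemma IsFtmvSet.grid_adj_of_fst_eq (hX : IsFtmvSet (pathGraph m □ pathGraph n) 1 X)
    {x y : Fin m × Fin n} (hx : x ∈ X) (hy : y ∈ X) (hxy : x ≠ y) (hrow : x.1 = y.1) :
    (pathGraph m □ pathGraph n).Adj x y := by
  by_contra hadj
  obtain ⟨w₁, w₂, hne, h₁, h₂, -, -⟩ := hX.exists_two_geodesic_steps hx hy hxy hadj
  rw [grid_isGeodesicStep_iff] at h₁ h₂
  simp only [ne_eq, Prod.ext_iff, Fin.ext_iff] at hne hxy hrow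
  omega

lemma IsFtmvSet.grid_fst_eq_of_adj (hX : IsFtmvSet (pathGraph m □ pathGraph n) 1 X)
    {x y z : Fin m × Fin n} (hx : x ∈ X) (hy : y ∈ X) (hz : z ∈ X)
    (hadj : (pathGraph m □ pathGraph n).Adj x y) (hrow : x.1 = y.1) : z.1 = x.1 := by
  wlog hfar : Nat.dist y.2 z.2 < Nat.dist x.2 z.2 generalizing x y
  · rw [this hy hx hadj.symm hrow.symm (by
      rw [grid_adj_iff] at hadj; simp only [Nat.dist, Fin.ext_iff] at hfar hadj hrow ⊢; omega),
      hrow]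
  by_contra hzrow
  have hxz : x ≠ z := by rintro rfl; exact hzrow rfl
  have hxz_adj : ¬ (pathGraph m □ pathGraph n).Adj x z := by
    rw [grid_adj_iff]; simp only [Nat.dist, Fin.ext_iff] at hfar hzrow ⊢; omega
  obtain ⟨w₁, w₂, hne, h₁, h₂, hw₁, hw₂⟩ := hX.exists_two_geodesic_steps hx hz hxz hxz_adj
  have hy₁ : w₁ ≠ y := fun h => hw₁ (h ▸ hy)
  have hy₂ : w₂ ≠ y := fun h => hw₂ (h ▸ hy)
  rw [grid_isGeodesicStep_iff] at h₁ h₂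
  rw [grid_adj_iff] at hadj
  simp only [ne_eq, Prod.ext_iff, Fin.ext_iff, Nat.dist] at hne hrow hzrow hfar hy₁ hy₂
  omega

lemma IsFtmvSet.grid_ncard_le (hm : 2 ≤ m) (hX : IsFtmvSet (pathGraph m □ pathGraph n) 1 X) :
    X.ncard ≤ m := by
  by_cases hinj : Set.InjOn Prod.fst X
  · calc X.ncard = (Prod.fst '' X).ncard := hinj.ncard_image.symm
      _ ≤ (Set.univ : Set (Fin m)).ncard := Set.ncard_le_ncard (Set.subset_univ _)
      _ = m := by simp
  obtain ⟨x, hx, y, hy, hrow, hxy⟩ : ∃ x ∈ X, ∃ y ∈ X, x.1 = y.1 ∧ x ≠ y := by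
    simpa [Set.InjOn] using hinj
  have hxy_adj := hX.grid_adj_of_fst_eq hx hy hxy hrow
  have hsub : X ⊆ {x, y} := by
    intro z hz
    by_contra hzxy
    simp only [Set.mem_insert_iff, Set.mem_singleton_iff, not_or] at hzxy
    have hzrow := hX.grid_fst_eq_of_adj hx hy hz hxy_adj hrow
    have hzx := hX.grid_adj_of_fst_eq hz hx hzxy.1 hzrow
    have hzy := hX.grid_adj_of_fst_eq hz hy hzxy.2 (hzrow.trans hrow)
    rw [grid_adj_iff] at hzx hzy hxy_adj
    omega
  calc X.ncard ≤ ({x, y} : Set (Fin m × Fin n)).ncard := Set.ncard_le_ncard hsub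
    _ ≤ 2 := Set.ncard_insert_le _ _ |>.trans (by simp)
    _ ≤ m := hm

lemma isFtmvSet_grid_diag :
    IsFtmvSet (pathGraph m □ pathGraph n) 1 {p : Fin m × Fin n | (p.1 : ℕ) = (p.2 : ℕ)} :=
  isFtmvSet_one_boxProd_of_injOn (pathGraph_preconnected m) (pathGraph_preconnected n)
    (fun _ hp _ hq h => Prod.ext h (Fin.ext (hp.symm.trans ((congrArg Fin.val h).trans hq))))
    (fun _ hp _ hq h => Prod.ext (Fin.ext (hp.trans ((congrArg Fin.val h).trans hq.symm))) h)

lemma ncard_grid_diag (hmn : m ≤ n) :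
    {p : Fin m × Fin n | (p.1 : ℕ) = (p.2 : ℕ)}.ncard = m := by
  have : {p : Fin m × Fin n | (p.1 : ℕ) = (p.2 : ℕ)} =
      Set.range fun i => (i, Fin.castLE hmn i) := by
    ext ⟨i, j⟩
    simp only [Set.mem_ofPred_eq, Set.mem_range, Prod.mk.injEq]
    exact ⟨fun h => ⟨i, rfl, Fin.ext h⟩, fun ⟨_, hi, hj⟩ => hi ▸ hj ▸ rfl⟩
  rw [this, Set.ncard_range_of_injective fun i j h => congrArg Prod.fst h, Nat.card_fin]

end Grid

theorem stmt15 (m n : ℕ) (hm : 2 ≤ m) (hmn : m ≤ n) :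
    ftmvNum (pathGraph m □ pathGraph n) 1 = m ∧
    IsFtmvSet (pathGraph m □ pathGraph n) 1
      {p : Fin m × Fin n | (p.1 : ℕ) = (p.2 : ℕ)} :=
  ⟨ftmvNum_eq_of_forall_ncard_le isFtmvSet_grid_diag (ncard_grid_diag hmn)
      fun _ hY => hY.grid_ncard_le hm,
    isFtmvSet_grid_diag⟩
end
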